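/- Let R be a commutative ring, let m ≥ 1, let p : Fin m → R and q, r : Fin (m-1) → R. Let M be the m×m tridiagonal matrix over R whose diagonal entries are M_{i,i} = p_i, whose superdiagonal entries are M_{i,i+1} = q_i, whose subdiagonal entries are M_{i+1,i} = r_i, and all of whose other entries are 0. If q_i · r_i = 0 for every index i, then det M = ∏_{i=1}^{m} p_i. -/

import Mathlib

lemma tridiag_det_aux {R : Type*} [CommRing R] :
    ∀ (n : ℕ) (M : Matrix (Fin n) (Fin n) R),
      (∀ i j : Fin n, (i : ℕ) + 1 < (j : ℕ) ∨ (j : ℕ) + 1 < (i : ℕ) → M i j = 0) →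
      (∀ i j : Fin n, (j : ℕ) = (i : ℕ) + 1 → M i j * M j i = 0) →
      M.det = ∏ i, M i i := by
  intro n
  induction n with
  | zero => intro M _ _; simp
  | succ k ih =>
    intro M htri hqr
    rcases k with _ | k
    · simp [Matrix.det_fin_one]
    rw [Matrix.det_succ_row_zero]
    have h01 : (0 : Fin (k + 2)) ≠ 1 := by simp [Fin.ext_iff]
    set f : Fin (k + 2) → R :=
      fun j => (-1 : R) ^ (j : ℕ) * M 0 j * (M.submatrix Fin.succ j.succAbove).det with hf
    have hsum : ∑ j, f j = f 0 + f 1 := by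
      rw [← Finset.sum_subset (Finset.subset_univ ({0, 1} : Finset (Fin (k + 2))))]
      · rw [Finset.sum_pair h01]
      · intro j _ hj
        simp only [Finset.mem_insert, Finset.mem_singleton, not_or] at hj
        have h0 : (j : ℕ) ≠ 0 := fun h => hj.1 (Fin.ext (by simp [h]))
        have h1 : (j : ℕ) ≠ 1 := fun h => hj.2 (Fin.ext (by simp [h, Fin.val_one]))
        have : M 0 j = 0 := htri 0 j (Or.inl (by simp only [Fin.val_zero]; omega))
        simp [hf, this]
    have hsa : (1 : Fin (k + 2)).succAbove 0 = 0 := rfl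
    have hf1 : f 1 = 0 := by
      have key : M 0 1 * (M.submatrix Fin.succ (1 : Fin (k + 2)).succAbove).det = 0 := by
        rw [Matrix.det_succ_column_zero, Finset.mul_sum]
        apply Finset.sum_eq_zero
        intro i _
        rcases eq_or_ne i 0 with rfl | hi
        · have hN : (M.submatrix Fin.succ (1 : Fin (k + 2)).succAbove) 0 0 = M 1 0 := by
            simp [Matrix.submatrix_apply, hsa, Fin.succ_zero_eq_one]
          have h2 : M 0 1 * M 1 0 = 0 := hqr 0 1 (by simp [Fin.val_one])
          rw [hN]
          rw [show M 0 1 * ((-1 : R) ^ ((0 : Fin (k + 1)) : ℕ) * M 1 0 *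
              ((M.submatrix Fin.succ (1 : Fin (k + 2)).succAbove).submatrix
                (0 : Fin (k + 1)).succAbove Fin.succ).det)
              = (M 0 1 * M 1 0) * ((-1 : R) ^ ((0 : Fin (k + 1)) : ℕ) *
              ((M.submatrix Fin.succ (1 : Fin (k + 2)).succAbove).submatrix
                (0 : Fin (k + 1)).succAbove Fin.succ).det) by ring, h2, zero_mul]
        · have hi' : (1 : ℕ) ≤ (i : ℕ) := by
            have := Fin.ext_iff.not.mp hi
            simp only [Fin.val_zero] at this ⊢
            omega
          have hN : M i.succ 0 = 0 := by
            apply htri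
            right
            simp only [Fin.val_zero, Fin.val_succ]
            omega
          simp [Matrix.submatrix_apply, hsa, hN]
      simp only [hf, Fin.val_one, pow_one]
      rw [show (-1 : R) * M 0 1 * (M.submatrix Fin.succ (1 : Fin (k + 2)).succAbove).det
        = -(M 0 1 * (M.submatrix Fin.succ (1 : Fin (k + 2)).succAbove).det) by ring, key, neg_zero]
    have hf0 : f 0 = M 0 0 * ∏ i : Fin (k + 1), M i.succ i.succ := by
      have hrec : (M.submatrix Fin.succ Fin.succ).det
          = ∏ i : Fin (k + 1), M i.succ i.succ := by
        have := ih (M.submatrix Fin.succ Fin.succ)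
          (fun i j h => htri i.succ j.succ (by simpa [Fin.val_succ] using by omega))
          (fun i j h => hqr i.succ j.succ (by simp [Fin.val_succ]; omega))
        simpa using this
      simp [hf, Fin.succAbove_zero, hrec]
    rw [hsum, hf0, hf1, add_zero]
    conv_rhs => rw [Fin.prod_univ_succ]


/-- The general determinant computation underlying Lemma 4.9 of the paper:
over a commutative ring, a tridiagonal matrix whose super- and subdiagonal
entries satisfy `q i * r i = 0` has determinant equal to the product of its
diagonal entries. -/
theorem tridiagonal_det_comm_ring (R : Type*) [CommRing R] (m : ℕ) (hm : 1 ≤ m)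
    (p : Fin m → R) (q r : Fin (m - 1) → R)
    (M : Matrix (Fin m) (Fin m) R)
    (hdiag : ∀ i : Fin m, M i i = p i)
    (hsup : ∀ i : Fin (m - 1),
      M ⟨i.1, by have h := i.2; omega⟩ ⟨i.1 + 1, by have h := i.2; omega⟩ = q i)
    (hsub : ∀ i : Fin (m - 1),
      M ⟨i.1 + 1, by have h := i.2; omega⟩ ⟨i.1, by have h := i.2; omega⟩ = r i)
    (hzero : ∀ i j : Fin m, (i : ℕ) ≠ (j : ℕ) → (j : ℕ) ≠ (i : ℕ) + 1 →
      (i : ℕ) ≠ (j : ℕ) + 1 → M i j = 0)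
    (hqr : ∀ i : Fin (m - 1), q i * r i = 0) :
    M.det = ∏ i, p i := by
  have haux := tridiag_det_aux m M
    (fun i j h => hzero i j (by omega) (by omega) (by omega))
    (fun i j hij => by
      have hi : (i : ℕ) < m - 1 := by have := j.2; omega
      have hjeq : j = ⟨(i : ℕ) + 1, by omega⟩ := Fin.ext hij
      have h1 : M i j = q ⟨(i : ℕ), hi⟩ := by
        rw [hjeq]
        exact hsup ⟨(i : ℕ), hi⟩
      have h2 : M j i = r ⟨(i : ℕ), hi⟩ := by
        rw [hjeq]
        exact hsub ⟨(i : ℕ), hi⟩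
      rw [h1, h2]
      exact hqr _)
  rw [haux]
  exact Finset.prod_congr rfl (fun i _ => hdiag i)
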